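/- arXiv:2204.07212 — 6 statements merged into one kernel-verified Lean document; each statement's English description precedes it below -/
import Mathlib

section
/- Let α0, p1, p2 ∈ [0,1] with α0 ≤ 4/5. Define f1 = (2p1p2(1−p1) + (1−2p1+2p1²)(1−p2))², f2 = (1−p2)(1−2p1+2p1²), and α̲ = (α0²f1 + α0(1−α0)f2) / (α0²f1 + 2α0(1−α0)f2 + (1−α0)²). Then α̲ ≤ α0. -/
/-!
Clearing the (positive) denominator `D`, one finds `α₀ D - N = α₀ (1 - α₀) E` with
`E = α₀ (1 - f₁) + (1 - 2 α₀) (1 - f₂)`. Since `E` is affine in `α₀`, it suffices that `E ≥ 0` at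
`α₀ = 0` and at `α₀ = 4/5`, i.e. `f₂ ≤ 1` and `3 (1 - f₂) ≤ 4 (1 - f₁)`. Writing
`q = 2 p₁ (1 - p₁) ∈ [0, 1/2]`, one has `f₂ = (1 - q)(1 - p₂)` and `f₁ = (q p₂ + (1 - q)(1 - p₂))²`;
the difference `4 (1 - f₁) - 3 (1 - f₂)` is concave in `p₂` and nonnegative at `p₂ = 0, 1`.
It vanishes at `p₁ = 1/2, p₂ = 1`, so the bound `4/5` is sharp.
-/

theorem mixture_ratio_le_self {α F₁ F₂ : ℝ} (hα₀ : 0 ≤ α) (hα₁ : α < 1)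
    (hF₁ : 0 ≤ F₁) (hF₂ : 0 ≤ F₂) (h : 0 ≤ α * (1 - F₁) + (1 - 2 * α) * (1 - F₂)) :
    (α ^ 2 * F₁ + α * (1 - α) * F₂) / (α ^ 2 * F₁ + 2 * α * (1 - α) * F₂ + (1 - α) ^ 2) ≤ α := by
  have hα : 0 ≤ α * (1 - α) := mul_nonneg hα₀ (by linarith)
  have hD : 0 < α ^ 2 * F₁ + 2 * α * (1 - α) * F₂ + (1 - α) ^ 2 := by
    have : 0 < (1 - α) ^ 2 := pow_pos (by linarith) 2
    nlinarith [mul_nonneg (sq_nonneg α) hF₁, mul_nonneg hα hF₂]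
  rw [div_le_iff₀ hD]
  nlinarith [mul_nonneg hα h]

theorem affine_nonneg_of_le_four_fifths {α F₁ F₂ : ℝ} (hα₀ : 0 ≤ α) (hα : α ≤ 4 / 5)
    (hF₂ : F₂ ≤ 1) (h : 3 * (1 - F₂) ≤ 4 * (1 - F₁)) :
    0 ≤ α * (1 - F₁) + (1 - 2 * α) * (1 - F₂) := by
  nlinarith [mul_le_mul_of_nonneg_left h hα₀,
    mul_nonneg (by linarith : (0 : ℝ) ≤ 4 / 5 - α) (by linarith : (0 : ℝ) ≤ 1 - F₂)]

theorem three_mul_one_sub_le_four_mul_one_sub_sq {a b : ℝ} (ha₀ : 0 ≤ a) (ha : a ≤ 1 / 2)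
    (hb₀ : 0 ≤ b) (hb₁ : b ≤ 1) :
    3 * (1 - (1 - a) * (1 - b)) ≤ 4 * (1 - (a * b + (1 - a) * (1 - b)) ^ 2) := by
  -- interpolation of a quadratic in `b` with leading coefficient `-4 (1 - 2a)²` between `b = 0, 1`
  have key : 4 * (1 - (a * b + (1 - a) * (1 - b)) ^ 2) - 3 * (1 - (1 - a) * (1 - b)) =
      (1 - b) * (a * (5 - 4 * a)) + b * ((1 - 2 * a) * (1 + 2 * a)) +
        4 * (1 - 2 * a) ^ 2 * (b * (1 - b)) := by ring
  have h₁ : 0 ≤ (1 - b) * (a * (5 - 4 * a)) :=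
    mul_nonneg (by linarith) (mul_nonneg ha₀ (by linarith))
  have h₂ : 0 ≤ b * ((1 - 2 * a) * (1 + 2 * a)) :=
    mul_nonneg hb₀ (mul_nonneg (by linarith) (by linarith))
  have h₃ : 0 ≤ 4 * (1 - 2 * a) ^ 2 * (b * (1 - b)) := by
    have : 0 ≤ b * (1 - b) := mul_nonneg hb₀ (by linarith)
    positivity
  linarith

theorem two_mul_mul_one_sub_le_half (p : ℝ) : 2 * p * (1 - p) ≤ 1 / 2 := by
  nlinarith [sq_nonneg (2 * p - 1)]

/-- For `α0 ≤ 4/5`, the Byzantine fraction in the all-match set `T̲`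
is no larger than `α0`. -/
theorem alpha_low_le_alpha0
    (α0 p1 p2 f1 f2 : ℝ)
    (hα0 : α0 ∈ Set.Icc (0:ℝ) 1) (hp1 : p1 ∈ Set.Icc (0:ℝ) 1)
    (hp2 : p2 ∈ Set.Icc (0:ℝ) 1) (hα04 : α0 ≤ 4/5)
    (hf1 : f1 = (2*p1*p2*(1-p1) + (1-2*p1+2*p1^2)*(1-p2))^2)
    (hf2 : f2 = (1-p2)*(1-2*p1+2*p1^2)) :
    (α0^2*f1 + α0*(1-α0)*f2) /
      (α0^2*f1 + 2*α0*(1-α0)*f2 + (1-α0)^2) ≤ α0 := by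
  obtain ⟨hp1₀, hp1₁⟩ := hp1
  obtain ⟨hp2₀, hp2₁⟩ := hp2
  set q := 2 * p1 * (1 - p1) with hq
  have hq₀ : 0 ≤ q := by have := mul_nonneg hp1₀ (sub_nonneg.2 hp1₁); linarith
  have hq₁ : q ≤ 1 / 2 := two_mul_mul_one_sub_le_half p1
  have hf1q : f1 = (q * p2 + (1 - q) * (1 - p2)) ^ 2 := by rw [hf1]; ring
  have hf2q : f2 = (1 - q) * (1 - p2) := by rw [hf2]; ring
  have hf2₀ : 0 ≤ f2 := hf2q ▸ mul_nonneg (by linarith) (by linarith)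
  have hf2₁ : f2 ≤ 1 := hf2q ▸ mul_le_one₀ (by linarith) (by linarith) (by linarith)
  refine mixture_ratio_le_self hα0.1 (by linarith) (hf1 ▸ sq_nonneg _) hf2₀ ?_
  refine affine_nonneg_of_le_four_fifths hα0.1 hα04 hf2₁ ?_
  rw [hf1q, hf2q]
  exact three_mul_one_sub_le_four_mul_one_sub_sq hq₀ hq₁ hp2₀ hp2₁
end

section
/- Let α0, p1, p2 ∈ [0,1] with α0 ≤ 4/5. Define f1 = (2p1p2(1−p1) + (1−2p1+2p1²)(1−p2))², f2 = (1−p2)(1−2p1+2p1²), β = α0²f1 + 2α0(1−α0)f2 + (1−α0)², and ᾱ = (α0 − (α0²f1 + α0(1−α0)f2)) / (1 − β). If 1 − β > 0, then ᾱ ≥ α0. -/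
/-!
Write `q = p1² + (1 - p1)² ∈ [1/2, 1]` for the probability that two independent flips with
probability `p1` agree. Then `f2 = q (1 - p2)` and `f1 = A²` with `A = (1 - q) p2 + q (1 - p2)`.
Clearing the denominator, `ᾱ - α0` has the sign of `α0 (1 - α0) B(α0)` with
`B(α0) = (1 - α0) + (2 α0 - 1) f2 - α0 f1`. Since `f2² ≤ f1`, `B` is non-increasing in `α0`,
and `5 B(4/5) = 1 + 3 f2 - 4 f1 ≥ 0`, a quadratic inequality in `q` and `p2`.
-/

open Set

lemma one_sub_two_mul_add_two_mul_sq_mem_Icc {p : ℝ} (hp : p ∈ Icc (0 : ℝ) 1) :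
    1 - 2*p + 2*p^2 ∈ Icc (1/2 : ℝ) 1 := by
  obtain ⟨hp0, hp1⟩ := hp
  constructor
  · nlinarith [sq_nonneg (2*p - 1)]
  · nlinarith [mul_nonneg hp0 (sub_nonneg.2 hp1)]

section Mix

variable {q p : ℝ}

lemma sq_le_sq_mix (hq : q ∈ Icc (0 : ℝ) 1) (hp : p ∈ Icc (0 : ℝ) 1) :
    (q*(1-p))^2 ≤ ((1-q)*p + q*(1-p))^2 := by
  obtain ⟨hq0, hq1⟩ := hq
  obtain ⟨hp0, hp1⟩ := hp
  have h0 : 0 ≤ q*(1-p) := mul_nonneg (by linarith) (by linarith)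
  have hle : q*(1-p) ≤ (1-q)*p + q*(1-p) := by nlinarith
  exact pow_le_pow_left₀ h0 hle 2

/-- The difference of the two sides is concave in `p` and nonnegative at both endpoints; the
identity below makes this explicit. -/
lemma four_mul_mix_sq_le (hq : q ∈ Icc (1/2 : ℝ) 1) (hp : p ∈ Icc (0 : ℝ) 1) :
    4*((1-q)*p + q*(1-p))^2 ≤ 1 + 3*(q*(1-p)) := by
  obtain ⟨hq0, hq1⟩ := hq
  obtain ⟨hp0, hp1⟩ := hp
  set A := (1-q)*p + q*(1-p) with hA
  have hA0 : 0 ≤ A := by nlinarith [mul_nonneg (sub_nonneg.2 hq1) hp0]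
  have hAq : A ≤ q := by nlinarith [mul_nonneg hp0 (by linarith : (0:ℝ) ≤ 2*q-1)]
  have hid : 1 + 3*(q*(1-p)) - 4*A^2
      = 4*(A*(q-A)) + p*(2*q-1)^2 + (1-p)*((4*q+1)*(1-q)) := by
    rw [hA]; ring
  have h1 : 0 ≤ A*(q-A) := mul_nonneg hA0 (sub_nonneg.2 hAq)
  have h2 : 0 ≤ p*(2*q-1)^2 := mul_nonneg hp0 (sq_nonneg _)
  have h3 : 0 ≤ (1-p)*((4*q+1)*(1-q)) :=
    mul_nonneg (sub_nonneg.2 hp1) (mul_nonneg (by linarith) (sub_nonneg.2 hq1))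
  linarith

end Mix

lemma mismatch_bracket_nonneg {α0 f1 f2 : ℝ} (hα04 : α0 ≤ 4/5)
    (hf21 : f2^2 ≤ f1) (hf12 : 4*f1 ≤ 1 + 3*f2) :
    0 ≤ (1-α0) + (2*α0-1)*f2 - α0*f1 := by
  have hslope : 2*f2 - f1 - 1 ≤ 0 := by nlinarith [sq_nonneg (1 - f2)]
  calc 0 ≤ (1 + 3*f2 - 4*f1) / 5 := by linarith
    _ = (1 - f2) + 4/5 * (2*f2 - f1 - 1) := by ring
    _ ≤ (1 - f2) + α0 * (2*f2 - f1 - 1) := by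
      linarith [mul_le_mul_of_nonpos_right hα04 hslope]
    _ = (1-α0) + (2*α0-1)*f2 - α0*f1 := by ring

lemma le_div_one_sub_of_mismatch_bracket_nonneg {α0 f1 f2 : ℝ}
    (hα0 : α0 ∈ Icc (0 : ℝ) 1) (hpos : 0 < 1 - (α0^2*f1 + 2*α0*(1-α0)*f2 + (1-α0)^2))
    (hB : 0 ≤ (1-α0) + (2*α0-1)*f2 - α0*f1) :
    α0 ≤ (α0 - (α0^2*f1 + α0*(1-α0)*f2)) /
      (1 - (α0^2*f1 + 2*α0*(1-α0)*f2 + (1-α0)^2)) := by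
  rw [le_div_iff₀ hpos, ← sub_nonneg]
  have hid : (α0 - (α0^2*f1 + α0*(1-α0)*f2))
        - α0*(1 - (α0^2*f1 + 2*α0*(1-α0)*f2 + (1-α0)^2))
      = (α0*(1-α0))*((1-α0) + (2*α0-1)*f2 - α0*f1) := by ring
  rw [hid]
  exact mul_nonneg (mul_nonneg hα0.1 (sub_nonneg.2 hα0.2)) hB

/-- For `α0 ≤ 4/5`, the Byzantine fraction in the mismatch set `T̄`
is at least `α0`, provided the mismatch set has positive probability. -/
theorem alpha_high_ge_alpha0
    (α0 p1 p2 f1 f2 β : ℝ)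
    (hα0 : α0 ∈ Set.Icc (0:ℝ) 1) (hp1 : p1 ∈ Set.Icc (0:ℝ) 1)
    (hp2 : p2 ∈ Set.Icc (0:ℝ) 1) (hα04 : α0 ≤ 4/5)
    (hf1 : f1 = (2*p1*p2*(1-p1) + (1-2*p1+2*p1^2)*(1-p2))^2)
    (hf2 : f2 = (1-p2)*(1-2*p1+2*p1^2))
    (hβ : β = α0^2*f1 + 2*α0*(1-α0)*f2 + (1-α0)^2)
    (hβlt : 1 - β > 0) :
    (α0 - (α0^2*f1 + α0*(1-α0)*f2)) / (1 - β) ≥ α0 := by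
  set q := 1 - 2*p1 + 2*p1^2
  have hq_mem : q ∈ Icc (1/2 : ℝ) 1 := one_sub_two_mul_add_two_mul_sq_mem_Icc hp1
  have hf1' : f1 = ((1-q)*p2 + q*(1-p2))^2 := by rw [hf1]; ring
  have hf2' : f2 = q*(1-p2) := by rw [hf2]; ring
  have hf21 : f2^2 ≤ f1 := by
    rw [hf1', hf2']; exact sq_le_sq_mix (Icc_subset_Icc_left (by norm_num) hq_mem) hp2
  have hf12 : 4*f1 ≤ 1 + 3*f2 := by rw [hf1', hf2']; exact four_mul_mix_sq_le hq_mem hp2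
  subst hβ
  exact le_div_one_sub_of_mismatch_bracket_nonneg hα0 hβlt
    (mismatch_bracket_nonneg hα04 hf21 hf12)
end

section
/- Let α0, p2 ∈ [0,1] and define, for real p1, g(p1) = (α0²f1(p1) + α0(1−α0)f2(p1)) / (α0²f1(p1) + 2α0(1−α0)f2(p1) + (1−α0)²), where f1(p1) = (2p1p2(1−p1) + (1−2p1+2p1²)(1−p2))² and f2(p1) = (1−p2)(1−2p1+2p1²). Then g has derivative 0 at p1 = 1/2, i.e., p1 = 1/2 is a stationary point of α̲ as a function of p1 for every fixed p2 and α0. -/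
/-!
Both `f₁` and `f₂` are functions of `t = p₁(1 - p₁)` alone, so `g = G ∘ t` for a rational
function `G` that is differentiable at `t(1/2) = 1/4` (its denominator there is
`α₀²/4 + α₀(1-α₀)(1-p₂) + (1-α₀)² > 0`), while `t` is stationary at `1/2`.
-/

theorem HasDerivAt.comp_of_differentiableAt {G w : ℝ → ℝ} {x : ℝ}
    (hw : HasDerivAt w 0 x) (hG : DifferentiableAt ℝ G (w x)) : HasDerivAt (G ∘ w) 0 x := by
  simpa using hG.hasDerivAt.comp x hw

theorem hasDerivAt_mul_one_sub_self_half : HasDerivAt (fun p : ℝ => p * (1 - p)) 0 (1 / 2) :=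
  ((hasDerivAt_id' _).mul ((hasDerivAt_id' _).const_sub 1)).congr_deriv (by norm_num)

/-- `p1 = 1/2` is a stationary point of `α̲` as a function of `p1`. -/
theorem alpha_low_stationary_at_half
    (α0 p2 : ℝ)
    (hα0 : α0 ∈ Set.Icc (0:ℝ) 1) (hp2 : p2 ∈ Set.Icc (0:ℝ) 1) :
    HasDerivAt (fun p1 : ℝ =>
      (α0^2 * (2*p1*p2*(1-p1) + (1-2*p1+2*p1^2)*(1-p2))^2
        + α0*(1-α0) * ((1-p2)*(1-2*p1+2*p1^2))) /
      (α0^2 * (2*p1*p2*(1-p1) + (1-2*p1+2*p1^2)*(1-p2))^2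
        + 2*α0*(1-α0) * ((1-p2)*(1-2*p1+2*p1^2)) + (1-α0)^2))
      0 (1/2 : ℝ) := by
  set G : ℝ → ℝ := fun t =>
    (α0^2 * ((1-p2) - 2*(1-2*p2)*t)^2 + α0*(1-α0) * ((1-p2)*(1-2*t))) /
      (α0^2 * ((1-p2) - 2*(1-2*p2)*t)^2 + 2*α0*(1-α0) * ((1-p2)*(1-2*t)) + (1-α0)^2)
  have hden : α0^2 * ((1-p2) - 2*(1-2*p2)*(1/4))^2 + 2*α0*(1-α0) * ((1-p2)*(1-2*(1/4)))
      + (1-α0)^2 ≠ 0 := by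
    have : 0 ≤ α0 * (1 - α0) * (1 - p2) :=
      mul_nonneg (mul_nonneg hα0.1 (by linarith [hα0.2])) (by linarith [hp2.2])
    nlinarith [sq_nonneg (α0 - 1/2)]
  have hG : DifferentiableAt ℝ G ((fun p : ℝ => p * (1 - p)) (1 / 2)) := by
    norm_num only
    exact DifferentiableAt.div (by fun_prop) (by fun_prop) hden
  convert hasDerivAt_mul_one_sub_self_half.comp_of_differentiableAt hG using 1
  ext p1
  simp only [G, Function.comp_apply]
  ring
end

section
/- Let Pd, Pf ∈ ℝ with Pd ≠ Pf, and let α, p1 ∈ [0,1]. Define π11 = Pd(1 − αp1) + αp1(1 − Pd) and π10 = Pf(1 − αp1) + αp1(1 − Pf). Then π11 = π10 if and only if α·p1 = 1/2. -/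
/-- A decision that is `1` with probability `P` and is flipped with probability `q` reads `1` with
probability `P * (1 - q) + q * (1 - P)`. -/
theorem flipMix_sub_flipMix {R : Type*} [CommRing R] (P P' q : R) :
    (P * (1 - q) + q * (1 - P)) - (P' * (1 - q) + q * (1 - P')) = (1 - 2 * q) * (P - P') := by
  ring

theorem flipMix_eq_flipMix_iff {K : Type*} [Field K] [NeZero (2 : K)] {P P' : K} (h : P ≠ P')
    (q : K) : P * (1 - q) + q * (1 - P) = P' * (1 - q) + q * (1 - P') ↔ q = 1 / 2 := by
  rw [← sub_eq_zero, flipMix_sub_flipMix, mul_eq_zero, or_iff_left (sub_ne_zero.2 h),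
    sub_eq_zero, eq_div_iff (NeZero.ne 2), mul_comm, eq_comm]

theorem blinding_condition_general
    (Pd Pf α p1 : ℝ) (hPdPf : Pd ≠ Pf)
    (π11 π10 : ℝ)
    (hπ11 : π11 = Pd*(1 - α*p1) + α*p1*(1 - Pd))
    (hπ10 : π10 = Pf*(1 - α*p1) + α*p1*(1 - Pf)) :
    π11 = π10 ↔ α * p1 = 1/2 := by
  subst hπ11 hπ10
  exact flipMix_eq_flipMix_iff hPdPf (α * p1)

/-- The effective detection and false alarm probabilities coincide
iff `α·p1 = 1/2`. -/
theorem blinding_condition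
    (Pd Pf α p1 : ℝ) (hPdPf : Pd ≠ Pf)
    (hα : α ∈ Set.Icc (0:ℝ) 1) (hp1 : p1 ∈ Set.Icc (0:ℝ) 1)
    (π11 π10 : ℝ)
    (hπ11 : π11 = Pd*(1 - α*p1) + α*p1*(1 - Pd))
    (hπ10 : π10 = Pf*(1 - α*p1) + α*p1*(1 - Pf)) :
    π11 = π10 ↔ α * p1 = 1/2 :=
  blinding_condition_general Pd Pf α p1 hPdPf π11 π10 hπ11 hπ10
end

section
/- Let 0 < Pf < Pd < 1 and α, p1 ∈ [0,1]. Define π11 = Pd(1 − αp1) + αp1(1 − Pd) and π10 = Pf(1 − αp1) + αp1(1 − Pf); then π11, π10 ∈ (0,1). Define the Kullback–Leibler divergence D = π11·log(π11/π10) + (1 − π11)·log((1 − π11)/(1 − π10)). Then D = 0 if and only if α·p1 = 1/2. -/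
/-!
A sensor whose decision is `1` with probability `P` reports `1` with probability
`P (1 - t) + t (1 - P)` once the report is flipped with probability `t = α p1`. This is an affine
function of `P` with slope `1 - 2t`, so the two hypotheses produce the same report distribution
exactly when `t = 1/2`. Writing the binary divergence as the `klFun`-divergence
`b · klFun (a / b) + (1 - b) · klFun ((1 - a) / (1 - b))`, it vanishes exactly when the two
distributions agree, since `klFun ≥ 0` with equality only at `1`.
-/

open Real Set InformationTheory

noncomputable def binaryKL (a b : ℝ) : ℝ :=
  a * log (a / b) + (1 - a) * log ((1 - a) / (1 - b))

lemma binaryKL_eq_klFun {a b : ℝ} (hb₀ : b ≠ 0) (hb₁ : 1 - b ≠ 0) :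
    binaryKL a b = b * klFun (a / b) + (1 - b) * klFun ((1 - a) / (1 - b)) := by
  simp only [binaryKL, klFun_apply]
  field_simp
  ring

lemma binaryKL_eq_zero_iff {a b : ℝ} (ha : a ∈ Icc 0 1) (hb : b ∈ Ioo 0 1) :
    binaryKL a b = 0 ↔ a = b := by
  have hb₀ : b ≠ 0 := hb.1.ne'
  have hb₁ : 1 - b ≠ 0 := (sub_pos.2 hb.2).ne'
  have hq₀ : 0 ≤ a / b := div_nonneg ha.1 hb.1.le
  have hq₁ : 0 ≤ (1 - a) / (1 - b) := div_nonneg (sub_nonneg.2 ha.2) (sub_pos.2 hb.2).le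
  rw [binaryKL_eq_klFun hb₀ hb₁,
    add_eq_zero_iff_of_nonneg (mul_nonneg hb.1.le (klFun_nonneg hq₀))
      (mul_nonneg (sub_pos.2 hb.2).le (klFun_nonneg hq₁)),
    mul_eq_zero, mul_eq_zero, or_iff_right hb₀, or_iff_right hb₁,
    klFun_eq_zero_iff hq₀, klFun_eq_zero_iff hq₁, div_eq_one_iff_eq hb₀, div_eq_one_iff_eq hb₁,
    sub_right_inj, and_self]

def flipProb (t P : ℝ) : ℝ := P * (1 - t) + t * (1 - P)

lemma flipProb_mem_Ioo {t P : ℝ} (ht : t ∈ Icc 0 1) (hP : P ∈ Ioo 0 1) :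
    flipProb t P ∈ Ioo 0 1 := by
  have h1P : 1 - P ∈ Ioo 0 1 := ⟨sub_pos.2 hP.2, sub_lt_self 1 hP.1⟩
  have := convex_Ioo (0 : ℝ) 1 hP h1P (sub_nonneg.2 ht.2) ht.1 (sub_add_cancel 1 t)
  simpa only [flipProb, smul_eq_mul, mul_comm (1 - t)] using this

lemma flipProb_sub_flipProb (t P Q : ℝ) :
    flipProb t P - flipProb t Q = (P - Q) * (1 - 2 * t) := by
  simp only [flipProb]
  ring

lemma flipProb_eq_flipProb_iff {t P Q : ℝ} (hPQ : P ≠ Q) :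
    flipProb t P = flipProb t Q ↔ t = 1 / 2 := by
  rw [← sub_eq_zero, flipProb_sub_flipProb, mul_eq_zero, or_iff_right (sub_ne_zero.2 hPQ),
    sub_eq_zero]
  constructor <;> intro h <;> linarith

/-- The KL divergence between the received-decision distributions under
`H1` and `H0` vanishes iff `α·p1 = 1/2`. -/
theorem kld_zero_iff_blind
    (Pd Pf α p1 : ℝ)
    (hPf : 0 < Pf) (hPfPd : Pf < Pd) (hPd : Pd < 1)
    (hα : α ∈ Set.Icc (0:ℝ) 1) (hp1 : p1 ∈ Set.Icc (0:ℝ) 1)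
    (π11 π10 D : ℝ)
    (hπ11 : π11 = Pd*(1 - α*p1) + α*p1*(1 - Pd))
    (hπ10 : π10 = Pf*(1 - α*p1) + α*p1*(1 - Pf))
    (hD : D = π11 * Real.log (π11 / π10)
      + (1 - π11) * Real.log ((1 - π11) / (1 - π10))) :
    π11 ∈ Set.Ioo (0:ℝ) 1 ∧ π10 ∈ Set.Ioo (0:ℝ) 1 ∧
      (D = 0 ↔ α * p1 = 1/2) := by
  have ht : α * p1 ∈ Icc (0 : ℝ) 1 := ⟨mul_nonneg hα.1 hp1.1, mul_le_one₀ hα.2 hp1.1 hp1.2⟩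
  have h11 : π11 ∈ Ioo (0 : ℝ) 1 := hπ11 ▸ flipProb_mem_Ioo ht ⟨hPf.trans hPfPd, hPd⟩
  have h10 : π10 ∈ Ioo (0 : ℝ) 1 := hπ10 ▸ flipProb_mem_Ioo ht ⟨hPf, hPfPd.trans hPd⟩
  refine ⟨h11, h10, ?_⟩
  change D = binaryKL π11 π10 at hD
  rw [hD, binaryKL_eq_zero_iff (Ioo_subset_Icc_self h11) h10, hπ11, hπ10]
  exact flipProb_eq_flipProb_iff hPfPd.ne'
end

section
/- Let Pd, Pf, p1 ∈ [0,1] and π0, π1 > 0 with π0 + π1 = 1. Define κ10 = (1−Pf)p1 + Pf(1−p1), κ00 = 1 − κ10, κ11 = (1−Pd)p1 + Pd(1−p1), κ01 = 1 − κ11, P_HH = 2π0·Pf(1−Pf) + 2π1·Pd(1−Pd), and P_BH = π0(κ10(1−Pf) + κ00·Pf) + π1(κ11(1−Pd) + κ01·Pd). Then P_HH = P_BH if and only if p1 = 0 or (Pd = 1/2 and Pf = 1/2). -/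
/-!
A Byzantine node flipping with probability `p` disagrees with an honest sensor of rate `q`
more often than a second honest sensor does, by exactly `p * (1 - 2q)^2`. Hence
`P_BH - P_HH = p1 * (π0 (1 - 2 Pf)^2 + π1 (1 - 2 Pd)^2)`, a product of `p1` with a
positively weighted sum of squares.
-/

theorem flip_disagreement {R : Type*} [CommRing R] (q p : R) :
    ((1 - q) * p + q * (1 - p)) * (1 - q) + (1 - ((1 - q) * p + q * (1 - p))) * q =
      2 * q * (1 - q) + p * (1 - 2 * q) ^ 2 := by
  ring

theorem mul_sq_add_mul_sq_eq_zero_iff {K : Type*} [Field K] [LinearOrder K]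
    [IsStrictOrderedRing K] {a b x y : K} (ha : 0 < a) (hb : 0 < b) :
    a * x ^ 2 + b * y ^ 2 = 0 ↔ x = 0 ∧ y = 0 := by
  rw [add_eq_zero_iff_of_nonneg (by positivity) (by positivity)]
  simp [ha.ne', hb.ne']

theorem one_sub_two_mul_eq_zero_iff (x : ℝ) : 1 - 2 * x = 0 ↔ x = 1 / 2 := by
  constructor <;> intro h <;> linarith

theorem phh_eq_pbh_iff_general
    (Pd Pf p1 π0 π1 : ℝ)
    (hπ0 : 0 < π0) (hπ1 : 0 < π1)
    (κ10 κ00 κ11 κ01 PHH PBH : ℝ)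
    (hκ10 : κ10 = (1-Pf)*p1 + Pf*(1-p1))
    (hκ00 : κ00 = 1 - κ10)
    (hκ11 : κ11 = (1-Pd)*p1 + Pd*(1-p1))
    (hκ01 : κ01 = 1 - κ11)
    (hPHH : PHH = 2*π0*Pf*(1-Pf) + 2*π1*Pd*(1-Pd))
    (hPBH : PBH = π0*(κ10*(1-Pf) + κ00*Pf) + π1*(κ11*(1-Pd) + κ01*Pd)) :
    PHH = PBH ↔ p1 = 0 ∨ (Pd = 1/2 ∧ Pf = 1/2) := by
  subst hκ00 hκ01 hκ10 hκ11
  rw [flip_disagreement, flip_disagreement] at hPBH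
  calc PHH = PBH ↔ p1 * (π0 * (1 - 2 * Pf) ^ 2 + π1 * (1 - 2 * Pd) ^ 2) = 0 :=
        ⟨fun h => by linear_combination hPHH - hPBH - h,
          fun h => by linear_combination hPHH - hPBH - h⟩
    _ ↔ p1 = 0 ∨ (Pd = 1/2 ∧ Pf = 1/2) := by
        rw [mul_eq_zero, mul_sq_add_mul_sq_eq_zero_iff hπ0 hπ1, one_sub_two_mul_eq_zero_iff,
          one_sub_two_mul_eq_zero_iff, and_comm]

/-- `P_HH = P_BH` iff `p1 = 0` or `Pd = Pf = 1/2`. -/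
theorem phh_eq_pbh_iff
    (Pd Pf p1 π0 π1 : ℝ)
    (hPd : Pd ∈ Set.Icc (0:ℝ) 1) (hPf : Pf ∈ Set.Icc (0:ℝ) 1)
    (hp1 : p1 ∈ Set.Icc (0:ℝ) 1)
    (hπ0 : 0 < π0) (hπ1 : 0 < π1) (hπ : π0 + π1 = 1)
    (κ10 κ00 κ11 κ01 PHH PBH : ℝ)
    (hκ10 : κ10 = (1-Pf)*p1 + Pf*(1-p1))
    (hκ00 : κ00 = 1 - κ10)
    (hκ11 : κ11 = (1-Pd)*p1 + Pd*(1-p1))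
    (hκ01 : κ01 = 1 - κ11)
    (hPHH : PHH = 2*π0*Pf*(1-Pf) + 2*π1*Pd*(1-Pd))
    (hPBH : PBH = π0*(κ10*(1-Pf) + κ00*Pf) + π1*(κ11*(1-Pd) + κ01*Pd)) :
    PHH = PBH ↔ p1 = 0 ∨ (Pd = 1/2 ∧ Pf = 1/2) :=
  phh_eq_pbh_iff_general Pd Pf p1 π0 π1 hπ0 hπ1 κ10 κ00 κ11 κ01 PHH PBH hκ10 hκ00 hκ11 hκ01 hPHH
    hPBH
end
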